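/- Let X, X' be Bernoulli random variables and C, C' finite random variables, with (X', C') an i.i.d. copy of (X, C) and X conditionally Bernoulli(p_c) given C = c. If E[X] ≤ 0.01, then H(max(X, X') | C, C') ≥ 1.26 · H(X | C). -/

import Mathlib

open Finset

attribute [local instance] Classical.propDecidable

/-- Binary entropy function (base 2). Since `Real.logb 2 0 = 0`, `binEnt 0 = binEnt 1 = 0`. -/
noncomputable def binEnt (x : ℝ) : ℝ :=
  -x * Real.logb 2 x - (1 - x) * Real.logb 2 (1 - x)


/-- Shannon entropy (base 2) of a probability mass function on a finite type. -/
noncomputable def ent {α : Type*} [Fintype α] (f : α → ℝ) : ℝ :=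
  ∑ x, -(f x * Real.logb 2 (f x))

/-- Distribution of the random variable `X` under the pmf `μ` on `Ω`. -/
noncomputable def probOf {Ω α : Type*} [Fintype Ω] [Fintype α] (μ : Ω → ℝ) (X : Ω → α) : α → ℝ :=
  fun a => ∑ ω ∈ Finset.univ.filter (fun ω => X ω = a), μ ω

/-- Shannon entropy (base 2) of a random variable `X` under pmf `μ`. -/
noncomputable def entRV {Ω α : Type*} [Fintype Ω] [Fintype α] (μ : Ω → ℝ) (X : Ω → α) : ℝ :=
  ent (probOf μ X)

/-- Conditional Shannon entropy `H(X | Y) = H(X, Y) - H(Y)`. -/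
noncomputable def condEnt {Ω α β : Type*} [Fintype Ω] [Fintype α] [Fintype β]
    (μ : Ω → ℝ) (X : Ω → α) (Y : Ω → β) : ℝ :=
  entRV μ (fun ω => (X ω, Y ω)) - entRV μ Y

/-! ### Auxiliary analytic lemmas -/

lemma binEnt_nonneg {x : ℝ} (h0 : 0 ≤ x) (h1 : x ≤ 1) : 0 ≤ binEnt x := by
  unfold binEnt
  have t1 : x * Real.logb 2 x ≤ 0 := by
    rcases eq_or_lt_of_le h0 with h|h
    · simp [← h]
    · exact mul_nonpos_of_nonneg_of_nonpos h.le (Real.logb_nonpos one_lt_two h.le h1)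
  have t2 : (1-x) * Real.logb 2 (1-x) ≤ 0 := by
    rcases eq_or_lt_of_le h1 with h|h
    · simp [h]
    · exact mul_nonpos_of_nonneg_of_nonpos (by linarith)
        (Real.logb_nonpos one_lt_two (by linarith) (by linarith))
  nlinarith

/-- The core inequality in natural-log form. -/
lemma key_nat {a b : ℝ} (ha0 : 0 < a) (ha1 : a < 1) (hb0 : 0 < b) (hb1 : b < 1) :
    (16:ℝ)/25 * (a * (-b * Real.log b - (1-b) * Real.log (1-b))
      + b * (-a * Real.log a - (1-a) * Real.log (1-a)))
    ≤ -(a*b) * Real.log (a*b) - (1-a*b) * Real.log (1-a*b) := by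
  have hab0 : 0 < a*b := mul_pos ha0 hb0
  have hab1 : a*b < 1 := by nlinarith
  have hlogmul : Real.log (a*b) = Real.log a + Real.log b := Real.log_mul ha0.ne' hb0.ne'
  have h1 : Real.log (1-a*b) - Real.log (1-b) ≤ b*(1-a)/(1-b) := by
    have hq : (0:ℝ) < (1-a*b)/(1-b) := div_pos (by linarith) (by linarith)
    have := Real.log_le_sub_one_of_pos hq
    rw [Real.log_div (by linarith) (by linarith)] at this
    have he : (1-a*b)/(1-b) - 1 = b*(1-a)/(1-b) := by
      rw [div_sub' (by linarith : (1:ℝ)-b ≠ 0)]; ring_nf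
    linarith [he ▸ this]
  have h2 : Real.log (1-a*b) - Real.log (1-a) ≤ a*(1-b)/(1-a) := by
    have hq : (0:ℝ) < (1-a*b)/(1-a) := div_pos (by linarith) (by linarith)
    have := Real.log_le_sub_one_of_pos hq
    rw [Real.log_div (by linarith) (by linarith)] at this
    have he : (1-a*b)/(1-a) - 1 = a*(1-b)/(1-a) := by
      rw [div_sub' (by linarith : (1:ℝ)-a ≠ 0)]; ring_nf
    linarith [he ▸ this]
  have h1' : a*(1-b)*Real.log (1-a*b) - a*(1-b)*Real.log (1-b) ≤ a*b*(1-a) := by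
    have := mul_le_mul_of_nonneg_left h1 (by nlinarith : (0:ℝ) ≤ a*(1-b))
    calc a*(1-b)*Real.log (1-a*b) - a*(1-b)*Real.log (1-b)
        = a*(1-b)*(Real.log (1-a*b) - Real.log (1-b)) := by ring
      _ ≤ a*(1-b)*(b*(1-a)/(1-b)) := this
      _ = a*b*(1-a) := by
          rw [mul_comm (a*(1-b)), div_mul_eq_mul_div,
            div_eq_iff (by linarith : (1:ℝ)-b ≠ 0)]; ring
  have h2' : b*(1-a)*Real.log (1-a*b) - b*(1-a)*Real.log (1-a) ≤ a*b*(1-b) := by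
    have := mul_le_mul_of_nonneg_left h2 (by nlinarith : (0:ℝ) ≤ b*(1-a))
    calc b*(1-a)*Real.log (1-a*b) - b*(1-a)*Real.log (1-a)
        = b*(1-a)*(Real.log (1-a*b) - Real.log (1-a)) := by ring
      _ ≤ b*(1-a)*(a*(1-b)/(1-a)) := this
      _ = a*b*(1-b) := by
          rw [mul_comm (b*(1-a)), div_mul_eq_mul_div,
            div_eq_iff (by linarith : (1:ℝ)-a ≠ 0)]; ring
  have h4 : Real.log (1-a*b) ≤ -(a*b) := by
    have := Real.log_le_sub_one_of_pos (by linarith : (0:ℝ) < 1-a*b)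
    linarith
  have h5a : Real.log a ≤ a - 1 := Real.log_le_sub_one_of_pos ha0
  have h5b : Real.log b ≤ b - 1 := Real.log_le_sub_one_of_pos hb0
  rw [hlogmul]
  nlinarith [mul_nonneg (mul_nonneg ha0.le hb0.le)
      (mul_nonneg (by linarith : (0:ℝ) ≤ 1-a) (by linarith : (0:ℝ) ≤ 1-b)),
    mul_le_mul_of_nonneg_left h4 (by nlinarith : (0:ℝ) ≤ a*b),
    mul_le_mul_of_nonneg_left h5a (by nlinarith : (0:ℝ) ≤ a*b),
    mul_le_mul_of_nonneg_left h5b (by nlinarith : (0:ℝ) ≤ a*b),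
    mul_le_mul_of_nonneg_left h4 (by nlinarith : (0:ℝ) ≤ (1-a)*(1-b))]

@[simp] lemma binEnt_zero : binEnt 0 = 0 := by simp [binEnt]
@[simp] lemma binEnt_one : binEnt 1 = 0 := by simp [binEnt]

lemma binEnt_mul_log2 (x : ℝ) :
    binEnt x * Real.log 2 = -x * Real.log x - (1-x) * Real.log (1-x) := by
  have h2 : Real.log 2 ≠ 0 := ne_of_gt (Real.log_pos one_lt_two)
  unfold binEnt Real.logb
  field_simp

/-- The key pointwise inequality: `binEnt (a*b) ≥ 0.64 (a binEnt b + b binEnt a)`. -/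
lemma keyn {a b : ℝ} (ha0 : 0 ≤ a) (ha1 : a ≤ 1) (hb0 : 0 ≤ b) (hb1 : b ≤ 1) :
    (16:ℝ)/25 * (a * binEnt b + b * binEnt a) ≤ binEnt (a*b) := by
  rcases eq_or_lt_of_le ha0 with h|ha0'
  · simp [← h]
  rcases eq_or_lt_of_le hb0 with h|hb0'
  · simp [← h]
  rcases eq_or_lt_of_le ha1 with h|ha1'
  · subst h
    have := binEnt_nonneg hb0 hb1
    simp; nlinarith
  rcases eq_or_lt_of_le hb1 with h|hb1'
  · subst h
    have := binEnt_nonneg ha0 ha1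
    simp; nlinarith
  have hlog2 : 0 < Real.log 2 := Real.log_pos one_lt_two
  rw [← mul_le_mul_iff_left₀ hlog2]
  have e1 := binEnt_mul_log2 a
  have e2 := binEnt_mul_log2 b
  have e3 := binEnt_mul_log2 (a*b)
  have hk := key_nat ha0' ha1' hb0' hb1'
  nlinarith [hk]

/-- The "conditional entropy kernel". -/
noncomputable def kern (u v : ℝ) : ℝ :=
  -(u * Real.logb 2 u) - v * Real.logb 2 v + (u+v) * Real.logb 2 (u+v)

@[simp] lemma kern_zero_zero : kern 0 0 = 0 := by simp [kern]

lemma kern_nonneg {u v : ℝ} (hu : 0 ≤ u) (hv : 0 ≤ v) : 0 ≤ kern u v := by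
  unfold kern
  have h1 : u * Real.logb 2 u ≤ u * Real.logb 2 (u+v) := by
    rcases eq_or_lt_of_le hu with h|h
    · simp [← h]
    · exact mul_le_mul_of_nonneg_left (Real.logb_le_logb_of_le one_lt_two h (by linarith)) hu
  have h2 : v * Real.logb 2 v ≤ v * Real.logb 2 (u+v) := by
    rcases eq_or_lt_of_le hv with h|h
    · simp [← h]
    · exact mul_le_mul_of_nonneg_left (Real.logb_le_logb_of_le one_lt_two h (by linarith)) hv
  nlinarith

lemma kern_eq {u v : ℝ} (hu : 0 ≤ u) (hv : 0 ≤ v) (h : 0 < u + v) :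
    kern u v = (u+v) * binEnt (u/(u+v)) := by
  have hne : u + v ≠ 0 := h.ne'
  have hc : 1 - u/(u+v) = v/(u+v) := by field_simp; ring
  rcases eq_or_lt_of_le hu with h0|hu'
  · simp [← h0, kern, binEnt]
  rcases eq_or_lt_of_le hv with h0|hv'
  · subst h0
    have hu0 : u ≠ 0 := hu'.ne'
    simp only [kern, binEnt, add_zero, div_self hu0]
    simp
  unfold binEnt kern
  rw [hc, Real.logb_div hu'.ne' hne, Real.logb_div hv'.ne' hne]
  field_simp
  ring

/-- The kernel form of the key inequality. -/
lemma ker_main {x y x' y' : ℝ} (hx : 0 ≤ x) (hy : 0 ≤ y) (hx' : 0 ≤ x') (hy' : 0 ≤ y') :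
    (16:ℝ)/25 * (x' * kern x y + x * kern x' y')
      ≤ kern (x*x') ((x+y)*(x'+y') - x*x') := by
  rcases eq_or_lt_of_le (by positivity : (0:ℝ) ≤ x + y) with hq|hq
  · have hx0 : x = 0 := by linarith
    have hy0 : y = 0 := by linarith
    simp [hx0, hy0]
  rcases eq_or_lt_of_le (by positivity : (0:ℝ) ≤ x' + y') with hq'|hq'
  · have hx0 : x' = 0 := by linarith
    have hy0 : y' = 0 := by linarith
    simp [hx0, hy0]
  have h1 : kern x y = (x+y) * binEnt (x/(x+y)) := kern_eq hx hy hq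
  have h2 : kern x' y' = (x'+y') * binEnt (x'/(x'+y')) := kern_eq hx' hy' hq'
  have hsum : x*x' + ((x+y)*(x'+y') - x*x') = (x+y)*(x'+y') := by ring
  have hvnn : 0 ≤ (x+y)*(x'+y') - x*x' := by nlinarith
  have h3 : kern (x*x') ((x+y)*(x'+y') - x*x')
      = ((x+y)*(x'+y')) * binEnt ((x/(x+y)) * (x'/(x'+y'))) := by
    rw [kern_eq (by positivity) hvnn (by rw [hsum]; positivity), hsum]
    congr 1
    field_simp
  rw [h1, h2, h3]
  have hk := keyn (div_nonneg hx hq.le) ((div_le_one hq).mpr (by linarith))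
    (div_nonneg hx' hq'.le) ((div_le_one hq').mpr (by linarith))
  have := mul_le_mul_of_nonneg_left hk (by positivity : (0:ℝ) ≤ (x+y)*(x'+y'))
  calc (16:ℝ)/25 * (x' * ((x+y) * binEnt (x/(x+y))) + x * ((x'+y') * binEnt (x'/(x'+y'))))
      = ((x+y)*(x'+y')) * ((16:ℝ)/25 * ((x/(x+y)) * binEnt (x'/(x'+y'))
          + (x'/(x'+y')) * binEnt (x/(x+y)))) := by
        field_simp; ring
    _ ≤ ((x+y)*(x'+y')) * binEnt ((x/(x+y)) * (x'/(x'+y'))) := this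

/-! ### Auxiliary probability lemmas -/

section ProbAux
variable {Ω β γ : Type*} [Fintype Ω] [Fintype β] [Fintype γ] (μ : Ω → ℝ)

lemma probOf_nonneg (hμ0 : ∀ ω, 0 ≤ μ ω) (T : Ω → β) (b : β) : 0 ≤ probOf μ T b :=
  Finset.sum_nonneg fun ω _ => hμ0 ω

lemma sum_probOf (T : Ω → β) : ∑ b, probOf μ T b = ∑ ω, μ ω := by
  unfold probOf
  simp only [Finset.sum_filter]
  rw [Finset.sum_comm]
  apply Finset.sum_congr rfl
  intro ω _
  simp

lemma probOf_comp (T : Ω → β) (g : β → γ) (c : γ) :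
    probOf μ (fun ω => g (T ω)) c = ∑ b ∈ univ.filter (fun b => g b = c), probOf μ T b := by
  unfold probOf
  simp only [Finset.sum_filter]
  have hpush : ∀ (P : Prop) [Decidable P] (f : Ω → ℝ),
      (if P then ∑ x, f x else 0) = ∑ x, if P then f x else 0 := by
    intro P _ f; split_ifs <;> simp
  simp only [hpush]
  rw [Finset.sum_comm]
  apply Finset.sum_congr rfl
  intro ω _
  have : ∀ b, (if g b = c then if T ω = b then μ ω else 0 else 0)
      = (if T ω = b then if g b = c then μ ω else 0 else 0) := by
    intro b; split_ifs <;> rfl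
  simp only [this]
  rw [Finset.sum_ite_eq]
  simp

lemma probOf_comp_eval (T : Ω → β) (g : β → γ) (c : γ) (f : β → ℝ)
    (hf : ∀ b, probOf μ T b = f b) :
    probOf μ (fun ω => g (T ω)) c = ∑ b, if g b = c then f b else 0 := by
  rw [probOf_comp, Finset.sum_filter]
  exact Finset.sum_congr rfl fun b _ => by rw [hf]

end ProbAux

lemma sum_prod_mul {α : Type*} [Fintype α] (f g : α → ℝ) :
    ∑ p : α × α, f p.1 * g p.2 = (∑ c, f c) * (∑ c, g c) := by
  rw [Fintype.sum_prod_type, Finset.sum_mul_sum]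

theorem stmt17 {Ω α : Type*} [Fintype Ω] [Fintype α] (μ : Ω → ℝ)
    (hμ0 : ∀ ω, 0 ≤ μ ω) (hμ1 : ∑ ω, μ ω = 1)
    (X X' : Ω → Bool) (C C' : Ω → α)
    (hid : probOf μ (fun ω => (X ω, C ω)) = probOf μ (fun ω => (X' ω, C' ω)))
    (hindep : ∀ a b, probOf μ (fun ω => ((X ω, C ω), (X' ω, C' ω))) (a, b)
      = probOf μ (fun ω => (X ω, C ω)) a * probOf μ (fun ω => (X' ω, C' ω)) b)
    (hE : ∑ ω ∈ Finset.univ.filter (fun ω => X ω = true), μ ω ≤ 0.01) :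
    condEnt μ (fun ω => X ω || X' ω) (fun ω => (C ω, C' ω)) ≥ 1.26 * condEnt μ X C := by
  set P : Bool × α → ℝ := probOf μ (fun ω => (X ω, C ω)) with hPdef
  have hP0 : ∀ u, 0 ≤ P u := fun u => probOf_nonneg μ hμ0 _ u
  have hPsum : ∑ u, P u = 1 := by rw [hPdef, sum_probOf]; exact hμ1
  have hJoint : ∀ u : (Bool × α) × (Bool × α),
      probOf μ (fun ω => ((X ω, C ω), (X' ω, C' ω))) u = P u.1 * P u.2 := by
    intro u
    have h := hindep u.1 u.2
    rw [← hid] at h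
    simpa using h
  -- the marginal of C
  have hC : ∀ c : α, probOf μ C c = P (false, c) + P (true, c) := by
    intro c
    have h := probOf_comp_eval μ (fun ω => (X ω, C ω)) Prod.snd c P (fun _ => rfl)
    rw [show probOf μ C c = probOf μ (fun ω => Prod.snd (X ω, C ω)) c from rfl, h,
      Fintype.sum_prod_type, Fintype.sum_bool]
    simp
    ring
  -- P(X = true)
  have hXtrue : ∑ c, P (true, c) ≤ 0.01 := by
    have h := probOf_comp_eval μ (fun ω => (X ω, C ω)) Prod.fst true P (fun _ => rfl)
    have he : probOf μ X true = ∑ c, P (true, c) := by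
      rw [show probOf μ X true = probOf μ (fun ω => Prod.fst (X ω, C ω)) true from rfl, h,
        Fintype.sum_prod_type, Fintype.sum_bool]
      simp
    rw [← he]
    refine le_trans (le_of_eq ?_) hE
    unfold probOf
    congr 1
    exact Finset.filter_congr_decidable _ _ _
  -- joint distribution of (C, C')
  have hCC' : ∀ c c' : α, probOf μ (fun ω => (C ω, C' ω)) (c, c')
      = (P (false, c) + P (true, c)) * (P (false, c') + P (true, c')) := by
    intro c c'
    have h := probOf_comp_eval μ (fun ω => ((X ω, C ω), (X' ω, C' ω)))
      (fun u => (u.1.2, u.2.2)) (c, c') _ hJoint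
    rw [show probOf μ (fun ω => (C ω, C' ω))
        = probOf μ (fun ω => ((fun u : (Bool × α) × (Bool × α) => (u.1.2, u.2.2))
          ((X ω, C ω), (X' ω, C' ω)))) from rfl, h,
      Fintype.sum_prod_type]
    simp only [Fintype.sum_prod_type, Fintype.sum_bool, Prod.mk.injEq]
    simp [ite_and, Finset.sum_add_distrib, Finset.sum_ite_eq', mul_add, add_mul]
    ring
  -- joint distribution of (X || X', (C, C'))
  have hZf : ∀ c c' : α, probOf μ (fun ω => (X ω || X' ω, (C ω, C' ω))) (false, (c, c'))
      = P (false, c) * P (false, c') := by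
    intro c c'
    have h := probOf_comp_eval μ (fun ω => ((X ω, C ω), (X' ω, C' ω)))
      (fun u => (u.1.1 || u.2.1, (u.1.2, u.2.2))) (false, (c, c')) _ hJoint
    rw [show probOf μ (fun ω => (X ω || X' ω, (C ω, C' ω)))
        = probOf μ (fun ω => ((fun u : (Bool × α) × (Bool × α) => (u.1.1 || u.2.1, (u.1.2, u.2.2)))
          ((X ω, C ω), (X' ω, C' ω)))) from rfl, h]
    simp only [Fintype.sum_prod_type, Fintype.sum_bool, Prod.mk.injEq]
    simp [ite_and, Finset.sum_add_distrib, Finset.sum_ite_eq']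
  have hZt : ∀ c c' : α, probOf μ (fun ω => (X ω || X' ω, (C ω, C' ω))) (true, (c, c'))
      = P (false, c) * P (true, c') + P (true, c) * P (false, c')
        + P (true, c) * P (true, c') := by
    intro c c'
    have h := probOf_comp_eval μ (fun ω => ((X ω, C ω), (X' ω, C' ω)))
      (fun u => (u.1.1 || u.2.1, (u.1.2, u.2.2))) (true, (c, c')) _ hJoint
    rw [show probOf μ (fun ω => (X ω || X' ω, (C ω, C' ω)))
        = probOf μ (fun ω => ((fun u : (Bool × α) × (Bool × α) => (u.1.1 || u.2.1, (u.1.2, u.2.2)))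
          ((X ω, C ω), (X' ω, C' ω)))) from rfl, h]
    simp only [Fintype.sum_prod_type, Fintype.sum_bool, Prod.mk.injEq]
    simp [ite_and, Finset.sum_add_distrib, Finset.sum_ite_eq']
    ring
  -- abbreviations
  set Pf : α → ℝ := fun c => P (false, c) with hPf
  set Pt : α → ℝ := fun c => P (true, c) with hPt
  -- conditional entropy of X given C as a sum of kernels
  have hKX : condEnt μ X C = ∑ c, kern (Pf c) (Pt c) := by
    unfold condEnt entRV ent
    have h1 : ∑ u : Bool × α, -(P u * Real.logb 2 (P u))
        = ∑ c, (-(Pf c * Real.logb 2 (Pf c)) + -(Pt c * Real.logb 2 (Pt c))) := by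
      rw [Fintype.sum_prod_type, Fintype.sum_bool]
      rw [← Finset.sum_add_distrib]
      apply Finset.sum_congr rfl
      intro c _
      ring
    rw [show probOf μ (fun ω => (X ω, C ω)) = P from rfl, h1]
    have h2 : ∑ c, -(probOf μ C c * Real.logb 2 (probOf μ C c))
        = ∑ c, -((Pf c + Pt c) * Real.logb 2 (Pf c + Pt c)) := by
      apply Finset.sum_congr rfl
      intro c _
      rw [hC c]
    rw [h2, ← Finset.sum_sub_distrib]
    apply Finset.sum_congr rfl
    intro c _
    simp only [kern]
    ring
  -- conditional entropy of (X || X') given (C, C') as a sum of kernels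
  have hKZ : condEnt μ (fun ω => X ω || X' ω) (fun ω => (C ω, C' ω))
      = ∑ p : α × α, kern (Pf p.1 * Pf p.2)
          (Pf p.1 * Pt p.2 + Pt p.1 * Pf p.2 + Pt p.1 * Pt p.2) := by
    unfold condEnt entRV ent
    have h1 : ∑ u : Bool × (α × α),
        -(probOf μ (fun ω => (X ω || X' ω, (C ω, C' ω))) u
          * Real.logb 2 (probOf μ (fun ω => (X ω || X' ω, (C ω, C' ω))) u))
        = ∑ p : α × α,
            (-(Pf p.1 * Pf p.2 * Real.logb 2 (Pf p.1 * Pf p.2))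
            + -((Pf p.1 * Pt p.2 + Pt p.1 * Pf p.2 + Pt p.1 * Pt p.2)
                * Real.logb 2 (Pf p.1 * Pt p.2 + Pt p.1 * Pf p.2 + Pt p.1 * Pt p.2))) := by
      rw [Fintype.sum_prod_type, Fintype.sum_bool]
      rw [← Finset.sum_add_distrib]
      apply Finset.sum_congr rfl
      intro p _
      rcases p with ⟨c, c'⟩
      rw [hZf c c', hZt c c']
      ring
    have h2 : ∑ p : α × α,
        -(probOf μ (fun ω => (C ω, C' ω)) p * Real.logb 2 (probOf μ (fun ω => (C ω, C' ω)) p))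
        = ∑ p : α × α, -(((Pf p.1 + Pt p.1) * (Pf p.2 + Pt p.2))
            * Real.logb 2 ((Pf p.1 + Pt p.1) * (Pf p.2 + Pt p.2))) := by
      apply Finset.sum_congr rfl
      intro p _
      rcases p with ⟨c, c'⟩
      rw [hCC' c c']
    rw [h1, h2, ← Finset.sum_sub_distrib]
    apply Finset.sum_congr rfl
    intro p _
    have hq : (Pf p.1 + Pt p.1) * (Pf p.2 + Pt p.2)
        = Pf p.1 * Pf p.2 + (Pf p.1 * Pt p.2 + Pt p.1 * Pf p.2 + Pt p.1 * Pt p.2) := by ring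
    rw [hq]
    simp only [kern]
    ring
  -- total mass facts
  have hPfPt : ∑ c, Pf c + ∑ c, Pt c = 1 := by
    rw [← hPsum, Fintype.sum_prod_type, Fintype.sum_bool]
    exact add_comm _ _
  have hPf0 : ∀ c, 0 ≤ Pf c := fun c => hP0 _
  have hPt0 : ∀ c, 0 ≤ Pt c := fun c => hP0 _
  have hPfsum : (0.99 : ℝ) ≤ ∑ c, Pf c := by
    have h := hXtrue
    norm_num at h ⊢
    linarith [hPfPt]
  -- kernel sum bound
  have hKnn : 0 ≤ ∑ c, kern (Pf c) (Pt c) :=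
    Finset.sum_nonneg fun c _ => kern_nonneg (hPf0 c) (hPt0 c)
  -- main pointwise bound
  have hpt : ∀ p : α × α,
      (16:ℝ)/25 * (Pf p.2 * kern (Pf p.1) (Pt p.1) + Pf p.1 * kern (Pf p.2) (Pt p.2))
      ≤ kern (Pf p.1 * Pf p.2)
          (Pf p.1 * Pt p.2 + Pt p.1 * Pf p.2 + Pt p.1 * Pt p.2) := by
    intro p
    have hB : Pf p.1 * Pt p.2 + Pt p.1 * Pf p.2 + Pt p.1 * Pt p.2
        = (Pf p.1 + Pt p.1) * (Pf p.2 + Pt p.2) - Pf p.1 * Pf p.2 := by ring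
    rw [hB]
    exact ker_main (hPf0 p.1) (hPt0 p.1) (hPf0 p.2) (hPt0 p.2)
  have hsum1 : ∑ p : α × α, Pf p.2 * kern (Pf p.1) (Pt p.1)
      = (∑ c, kern (Pf c) (Pt c)) * (∑ c, Pf c) := by
    rw [← sum_prod_mul (fun c => kern (Pf c) (Pt c)) Pf]
    apply Finset.sum_congr rfl
    intro p _
    ring
  have hsum2 : ∑ p : α × α, Pf p.1 * kern (Pf p.2) (Pt p.2)
      = (∑ c, Pf c) * (∑ c, kern (Pf c) (Pt c)) := by
    rw [← sum_prod_mul Pf (fun c => kern (Pf c) (Pt c))]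
  have hge : ∑ p : α × α, kern (Pf p.1 * Pf p.2)
        (Pf p.1 * Pt p.2 + Pt p.1 * Pf p.2 + Pt p.1 * Pt p.2)
      ≥ (16:ℝ)/25 * (2 * ((∑ c, Pf c) * (∑ c, kern (Pf c) (Pt c)))) := by
    have := Finset.sum_le_sum (fun p (_ : p ∈ (univ : Finset (α × α))) => hpt p)
    rw [← Finset.mul_sum, Finset.sum_add_distrib, hsum1, hsum2] at this
    calc (16:ℝ)/25 * (2 * ((∑ c, Pf c) * (∑ c, kern (Pf c) (Pt c))))
        = (16:ℝ)/25 * ((∑ c, kern (Pf c) (Pt c)) * (∑ c, Pf c)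
            + (∑ c, Pf c) * (∑ c, kern (Pf c) (Pt c))) := by ring
      _ ≤ _ := this
  rw [hKX, hKZ]
  have hS1 : ∑ c, Pf c ≤ 1 := by
    have : 0 ≤ ∑ c, Pt c := Finset.sum_nonneg fun c _ => hPt0 c
    linarith
  have hSK : (0.99:ℝ) * (∑ c, kern (Pf c) (Pt c))
      ≤ (∑ c, Pf c) * (∑ c, kern (Pf c) (Pt c)) :=
    mul_le_mul_of_nonneg_right hPfsum hKnn
  norm_num at hge ⊢
  nlinarith [hge, hKnn, hSK]
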